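/- arXiv:2203.15769 — 7 statements merged into one kernel-verified Lean document; each statement's English description precedes it below -/
import Mathlib

section
/- Let f be a smooth symmetric concave function on an open symmetric convex cone Γ ⊆ ℝⁿ with f_i ≥ 0 on Γ, and fix σ < sup_Γ f with ∂Γ^σ ≠ ∅. Assume τ_σ := inf{ t_λ : λ ∈ ∂Γ^σ } > −∞, where t_λ = (∑ᵢ f_i(λ)λ_i)/(∑ⱼ f_j(λ)). Define Γ_{σ,f} = { t(λ − τ_σ·𝟏) : λ ∈ ∂Γ^σ, t > 0 }. Then for every λ ∈ ∂Γ^σ and every μ ∈ Γ_{σ,f}, one has ∑_{i=1}^n f_i(λ) μ_i ≥ 0. -/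
open Finset Filter Topology

/-- The i-th partial derivative `f_i(x) = ∂f/∂x_i (x)`. -/
noncomputable def pd {n : ℕ} (f : (Fin n → ℝ) → ℝ) (x : Fin n → ℝ) (i : Fin n) : ℝ :=
  fderiv ℝ f x (Pi.single i 1)

/-- The set of values `t_λ = (∑ f_i(λ) λ_i)/(∑ f_j(λ))` over the level set `∂Γ^σ`. -/
def tset {n : ℕ} (Γ : Set (Fin n → ℝ)) (f : (Fin n → ℝ) → ℝ) (σ : ℝ) : Set ℝ :=
  {t : ℝ | ∃ x ∈ Γ, f x = σ ∧ t = (∑ i, pd f x i * x i) / (∑ i, pd f x i)}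

/-- The cone `Γ_{σ,f} = { t (λ - τ 𝟏) : λ ∈ ∂Γ^σ, t > 0 }`. -/
def lcone {n : ℕ} (Γ : Set (Fin n → ℝ)) (f : (Fin n → ℝ) → ℝ) (σ τ : ℝ) :
    Set (Fin n → ℝ) :=
  {y | ∃ x ∈ Γ, f x = σ ∧ ∃ t : ℝ, 0 < t ∧ y = t • (x - fun _ => τ)}

/-- The set of `k` such that some vector with the first `k` coordinates negative and
the remaining coordinates positive belongs to `C`; `κ_C` is its greatest element. -/
def kset {n : ℕ} (C : Set (Fin n → ℝ)) : Set ℕ :=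
  {k : ℕ | ∃ α : Fin n → ℝ, (∀ i, 0 < α i) ∧
    (fun i : Fin n => if (i : ℕ) < k then -α i else α i) ∈ C}
theorem stmt2 {n : ℕ} (Γ : Set (Fin n → ℝ)) (f : (Fin n → ℝ) → ℝ)
    (hopen : IsOpen Γ) (hconv : Convex ℝ Γ)
    (hcone : ∀ x ∈ Γ, ∀ t : ℝ, 0 < t → t • x ∈ Γ)
    (horth : {x : Fin n → ℝ | ∀ i, 0 < x i} ⊆ Γ)
    (hΓsym : ∀ (g : Equiv.Perm (Fin n)), ∀ x ∈ Γ, x ∘ g ∈ Γ)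
    (hfsym : ∀ (g : Equiv.Perm (Fin n)), ∀ x ∈ Γ, f (x ∘ g) = f x)
    (hconc : ConcaveOn ℝ Γ f)
    (hsmooth : ContDiffOn ℝ (⊤ : ℕ∞) f Γ)
    (hdiff : ∀ x ∈ Γ, DifferentiableAt ℝ f x)
    (hpd : ∀ x ∈ Γ, ∀ i, 0 ≤ pd f x i)
    (σ : ℝ) (hσ : ∃ μ ∈ Γ, σ < f μ) (hne : ∃ x ∈ Γ, f x = σ)
    (τ : ℝ) (hτ : IsGLB (tset Γ f σ) τ) :
    ∀ lam ∈ Γ, f lam = σ →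
      ∀ μ ∈ lcone Γ f σ τ, 0 ≤ ∑ i, pd f lam i * μ i := by
  intro lam hlam hflam μ hμ
  obtain ⟨x, hx, hfx, t, ht, rfl⟩ := hμ
  -- fderiv applied to a vector is the sum of partials
  have hL : ∀ v : Fin n → ℝ, fderiv ℝ f lam v = ∑ i, v i * pd f lam i := by
    intro v
    have hv : v = ∑ i, v i • (Pi.single i 1 : Fin n → ℝ) := by
      ext j
      simp [Finset.sum_apply, Pi.single_apply, mul_ite]
    conv_lhs => rw [hv]
    rw [map_sum]
    simp [pd, smul_eq_mul]
  -- gradient inequality from concavity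
  have hgrad : 0 ≤ ∑ i, pd f lam i * (x i - lam i) := by
    set g : ℝ → ℝ := fun s => f (lam + s • (x - lam)) with hg
    have hγ : HasDerivAt (fun s : ℝ => lam + s • (x - lam)) (x - lam) 0 := by
      have h1 : HasDerivAt (fun s : ℝ => s • (x - lam)) ((1 : ℝ) • (x - lam)) 0 :=
        (hasDerivAt_id 0).smul_const (x - lam)
      simpa using h1.const_add lam
    have hF : HasFDerivAt f (fderiv ℝ f lam) (lam + (0 : ℝ) • (x - lam)) := by
      have hγ0 : lam + (0 : ℝ) • (x - lam) = lam := by simp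
      rw [hγ0]; exact (hdiff lam hlam).hasFDerivAt
    have hgd : HasDerivAt g (fderiv ℝ f lam (x - lam)) 0 := by
      have := hF.comp_hasDerivAt 0 hγ
      exact this
    have hmono : ∀ s ∈ Set.Ioc (0 : ℝ) 1, g 0 ≤ g s := by
      intro s hs
      have hconv2 : lam + s • (x - lam) = (1 - s) • lam + s • x := by module
      have hcc := hconc.2 hlam hx (by linarith [hs.2] : (0 : ℝ) ≤ 1 - s) hs.1.le (by ring)
      rw [← hconv2] at hcc
      calc g 0 = σ := by simp [hg, hflam]
        _ = (1 - s) • f lam + s • f x := by simp [hflam, hfx, smul_eq_mul]; ring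
        _ ≤ g s := hcc
    have hslope : Tendsto (slope g 0) (𝓝[>] (0 : ℝ)) (𝓝 (fderiv ℝ f lam (x - lam))) :=
      (hasDerivAt_iff_tendsto_slope.mp hgd).mono_left
        (nhdsWithin_mono _ (fun y hy => ne_of_gt hy))
    have hnonneg : ∀ᶠ s in 𝓝[>] (0 : ℝ), 0 ≤ slope g 0 s := by
      filter_upwards [Ioc_mem_nhdsGT (zero_lt_one)] with s hs
      have h1 : 0 ≤ g s - g 0 := by linarith [hmono s hs]
      have h2 : (0:ℝ) < s := hs.1
      simp only [slope, vsub_eq_sub, sub_zero, smul_eq_mul]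
      positivity
    have h0 : 0 ≤ fderiv ℝ f lam (x - lam) := ge_of_tendsto hslope hnonneg
    calc (0 : ℝ) ≤ fderiv ℝ f lam (x - lam) := h0
      _ = ∑ i, (x i - lam i) * pd f lam i := by rw [hL]; simp [Pi.sub_apply]
      _ = ∑ i, pd f lam i * (x i - lam i) := by simp [mul_comm]
  -- compare with τ
  set S : ℝ := ∑ i, pd f lam i with hS
  have hS0 : 0 ≤ S := Finset.sum_nonneg fun i _ => hpd lam hlam i
  have key : τ * S ≤ ∑ i, pd f lam i * x i := by
    rcases eq_or_lt_of_le hS0 with hSz | hSp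
    · have hall : ∀ i ∈ Finset.univ, pd f lam i = 0 :=
        Finset.sum_eq_zero_iff_of_nonneg (fun i _ => hpd lam hlam i) |>.mp hSz.symm
      have hsum0 : ∑ i, pd f lam i * x i = 0 :=
        Finset.sum_eq_zero fun i hi => by rw [hall i hi, zero_mul]
      rw [hsum0, ← hSz, mul_zero]
    · have hmem : (∑ i, pd f lam i * lam i) / S ∈ tset Γ f σ :=
        ⟨lam, hlam, hflam, rfl⟩
      have hτle : τ ≤ (∑ i, pd f lam i * lam i) / S := hτ.1 hmem
      have h1 : τ * S ≤ ∑ i, pd f lam i * lam i := by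
        have h := mul_le_mul_of_nonneg_right hτle hSp.le
        rwa [div_mul_cancel₀ _ (ne_of_gt hSp)] at h
      have hsplit : ∑ i, pd f lam i * (x i - lam i) =
          (∑ i, pd f lam i * x i) - ∑ i, pd f lam i * lam i := by
        rw [← Finset.sum_sub_distrib]
        exact Finset.sum_congr rfl fun i _ => by ring
      rw [hsplit] at hgrad
      linarith
  have hrw : ∀ i, pd f lam i * (t • (x - fun _ => τ) : Fin n → ℝ) i =
      t * (pd f lam i * x i) - t * (τ * pd f lam i) := by
    intro i
    simp [Pi.smul_apply, Pi.sub_apply, smul_eq_mul]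
    ring
  rw [Finset.sum_congr rfl fun i _ => hrw i, Finset.sum_sub_distrib,
    ← Finset.mul_sum, ← Finset.mul_sum, ← Finset.mul_sum, sub_nonneg]
  apply mul_le_mul_of_nonneg_left _ ht.le
  exact key
end

section
/- Let f be a smooth symmetric concave function on Γ with f_i ≥ 0, σ < sup_Γ f, ∂Γ^σ ≠ ∅, τ_σ finite, and suppose κ := κ_{Γ_{σ,f}} ≥ 1. Let α_1 ≥ ⋯ ≥ α_κ > 0 and α_{κ+1},…,α_n > 0 satisfy (−α_1,…,−α_κ, α_{κ+1},…,α_n) ∈ Γ_{σ,f}. Then for every λ ∈ ∂Γ^σ with λ_1 ≤ ⋯ ≤ λ_n, one has f_{κ+1}(λ) ≥ [α_1 / (∑_{i=κ+1}^n α_i − ∑_{i=2}^κ α_i)] · f_1(λ). -/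
open Finset Filter Topology

lemma concave_grad {n : ℕ} {Γ : Set (Fin n → ℝ)} {f : (Fin n → ℝ) → ℝ}
    (hconc : ConcaveOn ℝ Γ f) {x y : Fin n → ℝ} (hx : x ∈ Γ) (hy : y ∈ Γ)
    (hd : DifferentiableAt ℝ f x) :
    f y - f x ≤ fderiv ℝ f x (y - x) := by
  have hL : HasDerivAt (fun t : ℝ => x + t • (y - x)) (y - x) 0 := by
    simpa using ((hasDerivAt_id (0:ℝ)).smul_const (y - x)).const_add x
  have hfd : HasFDerivAt f (fderiv ℝ f x) (x + (0:ℝ) • (y - x)) := by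
    simpa using hd.hasFDerivAt
  have h : HasDerivAt (fun t : ℝ => f (x + t • (y - x))) (fderiv ℝ f x (y - x)) 0 :=
    hfd.comp_hasDerivAt 0 hL
  have hslope := hasDerivAt_iff_tendsto_slope.mp h
  have hsub : 𝓝[>] (0:ℝ) ≤ 𝓝[≠] (0:ℝ) :=
    nhdsWithin_mono _ (fun t ht => ne_of_gt ht)
  refine ge_of_tendsto (hslope.mono_left hsub) ?_
  filter_upwards [Ioo_mem_nhdsGT_of_mem (Set.left_mem_Ico.2 one_pos)] with t ht
  obtain ⟨ht0, ht1⟩ := ht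
  have hc := hconc.2 hx hy (show (0:ℝ) ≤ 1 - t by linarith) ht0.le (by ring)
  have hxy : x + t • (y - x) = (1 - t) • x + t • y := by module
  rw [slope_def_field, hxy]
  have hx0 : x + (0:ℝ) • (y - x) = x := by simp
  rw [hx0, sub_zero, le_div_iff₀ ht0]
  simp only [smul_eq_mul] at hc
  nlinarith [hc]

lemma fderiv_apply_eq {n : ℕ} (f : (Fin n → ℝ) → ℝ) (x w : Fin n → ℝ) :
    fderiv ℝ f x w = ∑ i, pd f x i * w i := by
  conv_lhs => rw [pi_eq_sum_univ w]
  rw [map_sum]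
  refine Finset.sum_congr rfl fun i _ => ?_
  rw [map_smul]
  have : (fun j => if i = j then (1:ℝ) else 0) = Pi.single i 1 := by
    funext j
    simp [Pi.single_apply, eq_comm]
  rw [this]
  simp [pd, mul_comm]

lemma fderiv_perm {n : ℕ} {Γ : Set (Fin n → ℝ)} {f : (Fin n → ℝ) → ℝ}
    (hopen : IsOpen Γ)
    (hΓsym : ∀ (g : Equiv.Perm (Fin n)), ∀ x ∈ Γ, x ∘ g ∈ Γ)
    (hfsym : ∀ (g : Equiv.Perm (Fin n)), ∀ x ∈ Γ, f (x ∘ g) = f x)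
    (hdiff : ∀ x ∈ Γ, DifferentiableAt ℝ f x)
    {x : Fin n → ℝ} (hx : x ∈ Γ) (g : Equiv.Perm (Fin n)) (v : Fin n → ℝ) :
    fderiv ℝ f x v = fderiv ℝ f (x ∘ g) (v ∘ g) := by
  set P : (Fin n → ℝ) →L[ℝ] (Fin n → ℝ) :=
    ContinuousLinearMap.pi (fun i => ContinuousLinearMap.proj (g i)) with hP
  have hPapp : ∀ w : Fin n → ℝ, P w = w ∘ g := fun w => rfl
  have hgx : x ∘ g ∈ Γ := hΓsym g x hx
  have h1 : (fun y => f (P y)) =ᶠ[𝓝 x] f := by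
    filter_upwards [hopen.mem_nhds hx] with y hy
    exact hfsym g y hy
  have h2 : fderiv ℝ (fun y => f (P y)) x = fderiv ℝ f x := h1.fderiv_eq
  have h3 : fderiv ℝ (fun y => f (P y)) x = (fderiv ℝ f (x ∘ g)).comp P := by
    have hd : DifferentiableAt ℝ f (P x) := hdiff _ hgx
    have := fderiv_comp (𝕜 := ℝ) x hd P.differentiableAt
    rw [P.fderiv, hPapp x] at this
    exact this
  calc fderiv ℝ f x v = fderiv ℝ (fun y => f (P y)) x v := by rw [h2]
    _ = fderiv ℝ f (x ∘ g) (P v) := by rw [h3]; rfl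
    _ = fderiv ℝ f (x ∘ g) (v ∘ g) := by rw [hPapp]

lemma pd_antitone {n : ℕ} {Γ : Set (Fin n → ℝ)} {f : (Fin n → ℝ) → ℝ}
    (hopen : IsOpen Γ)
    (hΓsym : ∀ (g : Equiv.Perm (Fin n)), ∀ x ∈ Γ, x ∘ g ∈ Γ)
    (hfsym : ∀ (g : Equiv.Perm (Fin n)), ∀ x ∈ Γ, f (x ∘ g) = f x)
    (hconc : ConcaveOn ℝ Γ f)
    (hdiff : ∀ x ∈ Γ, DifferentiableAt ℝ f x)
    {x : Fin n → ℝ} (hx : x ∈ Γ)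
    (hsort : ∀ i j : Fin n, i ≤ j → x i ≤ x j)
    {i j : Fin n} (hij : i ≤ j) : pd f x j ≤ pd f x i := by
  rcases eq_or_lt_of_le (hsort i j hij) with heq | hlt
  · -- x i = x j : use symmetry of the derivative
    set g := Equiv.swap i j with hg
    have hxg : x ∘ g = x := by
      funext k
      simp only [Function.comp_apply, hg, Equiv.swap_apply_def]
      split_ifs with h1 h2
      · rw [h1, heq]
      · rw [h2, heq]
      · rfl
    have := fderiv_perm hopen hΓsym hfsym hdiff hx g (Pi.single j 1)
    rw [hxg] at this
    have hsingle : (Pi.single j (1:ℝ)) ∘ g = Pi.single i 1 := by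
      funext k
      simp only [Function.comp_apply, Pi.single_apply, hg]
      have hiff : Equiv.swap i j k = j ↔ k = i := by
        rw [Equiv.apply_eq_iff_eq_symm_apply]
        simp
      simp only [hiff]
    rw [hsingle] at this
    simp only [pd]
    rw [this]
  · -- x i < x j : concavity with the swapped point
    have hne : i ≠ j := fun h => absurd (h ▸ hlt) (lt_irrefl _)
    set g := Equiv.swap i j with hg
    have hy : x ∘ g ∈ Γ := hΓsym g x hx
    have hfy : f (x ∘ g) = f x := hfsym g x hx
    have hcg := concave_grad hconc hx hy (hdiff x hx)
    rw [hfy, sub_self] at hcg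
    have hdiffv : x ∘ g - x = (x j - x i) • (Pi.single i 1 - Pi.single j 1) := by
      funext k
      simp only [Pi.sub_apply, Pi.smul_apply, Function.comp_apply, smul_eq_mul,
        Pi.single_apply, hg]
      by_cases hk1 : k = i
      · subst hk1; simp [Equiv.swap_apply_left, hne]
      · by_cases hk2 : k = j
        · subst hk2; simp [Equiv.swap_apply_right, Ne.symm hne]
        · rw [Equiv.swap_apply_of_ne_of_ne hk1 hk2]
          simp [hk1, hk2]
    rw [hdiffv, map_smul, map_sub] at hcg
    simp only [smul_eq_mul] at hcg
    simp only [pd]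
    nlinarith [hcg]

theorem stmt3 {n : ℕ} (Γ : Set (Fin n → ℝ)) (f : (Fin n → ℝ) → ℝ)
    (hopen : IsOpen Γ) (hconv : Convex ℝ Γ)
    (hcone : ∀ x ∈ Γ, ∀ t : ℝ, 0 < t → t • x ∈ Γ)
    (horth : {x : Fin n → ℝ | ∀ i, 0 < x i} ⊆ Γ)
    (hΓsym : ∀ (g : Equiv.Perm (Fin n)), ∀ x ∈ Γ, x ∘ g ∈ Γ)
    (hfsym : ∀ (g : Equiv.Perm (Fin n)), ∀ x ∈ Γ, f (x ∘ g) = f x)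
    (hconc : ConcaveOn ℝ Γ f)
    (hsmooth : ContDiffOn ℝ (⊤ : ℕ∞) f Γ)
    (hdiff : ∀ x ∈ Γ, DifferentiableAt ℝ f x)
    (hpd : ∀ x ∈ Γ, ∀ i, 0 ≤ pd f x i)
    (σ : ℝ) (hσ : ∃ μ ∈ Γ, σ < f μ) (hne : ∃ x ∈ Γ, f x = σ)
    (τ : ℝ) (hτ : IsGLB (tset Γ f σ) τ)
    (κ : ℕ) (hκmax : IsGreatest (kset (lcone Γ f σ τ)) κ)
    (hκ1 : 1 ≤ κ) (hκn : κ < n)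
    (α : Fin n → ℝ) (hαpos : ∀ i, 0 < α i)
    (hαdec : ∀ i j : Fin n, i ≤ j → (j : ℕ) < κ → α j ≤ α i)
    (hαmem : (fun i : Fin n => if (i : ℕ) < κ then -α i else α i) ∈ lcone Γ f σ τ)
    (lam : Fin n → ℝ) (hlam : lam ∈ Γ) (hlev : f lam = σ)
    (hsort : ∀ i j : Fin n, i ≤ j → lam i ≤ lam j) :
    (α ⟨0, by omega⟩ /
        ((∑ i ∈ Finset.univ.filter (fun i : Fin n => κ ≤ (i : ℕ)), α i) -
          ∑ i ∈ Finset.univ.filter (fun i : Fin n => 1 ≤ (i : ℕ) ∧ (i : ℕ) < κ), α i)) *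
        pd f lam ⟨0, by omega⟩ ≤ pd f lam ⟨κ, hκn⟩ := by
  have h0n : 0 < n := lt_of_le_of_lt (Nat.zero_le κ) hκn
  set i0 : Fin n := ⟨0, h0n⟩ with hi0def
  set iκ : Fin n := ⟨κ, hκn⟩ with hiκdef
  set A : ℝ := ∑ i ∈ Finset.univ.filter (fun i : Fin n => κ ≤ (i : ℕ)), α i with hA
  set B : ℝ := ∑ i ∈ Finset.univ.filter (fun i : Fin n => 1 ≤ (i : ℕ) ∧ (i : ℕ) < κ), α i with hB
  have hp : ∀ i, 0 ≤ pd f lam i := hpd lam hlam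
  have hanti : ∀ i j : Fin n, i ≤ j → pd f lam j ≤ pd f lam i :=
    fun i j hij => pd_antitone hopen hΓsym hfsym hconc hdiff hlam hsort hij
  by_cases hS : ∑ i, pd f lam i = 0
  · have hzero : ∀ i, pd f lam i = 0 := fun i =>
      (Finset.sum_eq_zero_iff_of_nonneg (fun i _ => hp i)).mp hS i (Finset.mem_univ i)
    have h1 : pd f lam (⟨0, by omega⟩ : Fin n) = 0 := hzero _
    have h2 : pd f lam (⟨κ, hκn⟩ : Fin n) = 0 := hzero _
    rw [h1, h2, mul_zero]
  have hSpos : 0 < ∑ i, pd f lam i :=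
    lt_of_le_of_ne (Finset.sum_nonneg fun i _ => hp i) (Ne.symm hS)
  -- τ is a lower bound for t_λ
  have htmem : (∑ i, pd f lam i * lam i) / (∑ i, pd f lam i) ∈ tset Γ f σ :=
    ⟨lam, hlam, hlev, rfl⟩
  have hτle : τ * (∑ i, pd f lam i) ≤ ∑ i, pd f lam i * lam i := by
    have h := hτ.1 htmem
    rwa [le_div_iff₀ hSpos] at h
  -- extract μ from the cone membership
  obtain ⟨μ, hμΓ, hμσ, t, ht, hveq⟩ := hαmem
  have hμi : ∀ i : Fin n, (if (i : ℕ) < κ then -α i else α i) = t * (μ i - τ) := by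
    intro i
    have := congr_fun hveq i
    simpa using this
  -- concavity gradient inequality
  have hgrad := concave_grad hconc hlam hμΓ (hdiff lam hlam)
  rw [hμσ, hlev, sub_self, fderiv_apply_eq] at hgrad
  -- key nonnegativity
  have hkey : 0 ≤ ∑ i, pd f lam i * (μ i - τ) := by
    have e1 : ∑ i, pd f lam i * (μ - lam) i
        = (∑ i, pd f lam i * μ i) - ∑ i, pd f lam i * lam i := by
      rw [← Finset.sum_sub_distrib]
      exact Finset.sum_congr rfl fun i _ => by simp [Pi.sub_apply]; ring
    have e2 : ∑ i, pd f lam i * (μ i - τ)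
        = (∑ i, pd f lam i * μ i) - τ * ∑ i, pd f lam i := by
      rw [Finset.mul_sum, ← Finset.sum_sub_distrib]
      exact Finset.sum_congr rfl fun i _ => by ring
    rw [e1] at hgrad
    rw [e2]
    linarith
  -- rewrite in terms of α
  have hvsum : 0 ≤ ∑ i, pd f lam i * (if (i : ℕ) < κ then -α i else α i) := by
    have e : ∑ i, pd f lam i * (if (i : ℕ) < κ then -α i else α i)
        = t * ∑ i, pd f lam i * (μ i - τ) := by
      rw [Finset.mul_sum]
      exact Finset.sum_congr rfl fun i _ => by rw [hμi i]; ring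
    rw [e]
    exact mul_nonneg ht.le hkey
  -- split the sum
  have hsplit := Finset.sum_filter_add_sum_filter_not Finset.univ
    (fun i : Fin n => (i : ℕ) < κ) (fun i => pd f lam i * (if (i : ℕ) < κ then -α i else α i))
  have eP : ∑ i ∈ Finset.univ.filter (fun i : Fin n => (i : ℕ) < κ),
      pd f lam i * (if (i : ℕ) < κ then -α i else α i)
      = - ∑ i ∈ Finset.univ.filter (fun i : Fin n => (i : ℕ) < κ), pd f lam i * α i := by
    rw [← Finset.sum_neg_distrib]
    refine Finset.sum_congr rfl fun i hi => ?_
    rw [if_pos (Finset.mem_filter.mp hi).2]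
    ring
  have eQ : ∑ i ∈ Finset.univ.filter (fun i : Fin n => ¬ (i : ℕ) < κ),
      pd f lam i * (if (i : ℕ) < κ then -α i else α i)
      = ∑ i ∈ Finset.univ.filter (fun i : Fin n => κ ≤ (i : ℕ)), pd f lam i * α i := by
    have hfe : Finset.univ.filter (fun i : Fin n => ¬ (i : ℕ) < κ)
        = Finset.univ.filter (fun i : Fin n => κ ≤ (i : ℕ)) := by
      ext i
      simp only [Finset.mem_filter, Finset.mem_univ, true_and]
      omega
    rw [hfe]
    refine Finset.sum_congr rfl fun i hi => ?_
    rw [if_neg (by have := (Finset.mem_filter.mp hi).2; omega)]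
  have hXY : ∑ i ∈ Finset.univ.filter (fun i : Fin n => (i : ℕ) < κ), pd f lam i * α i
      ≤ ∑ i ∈ Finset.univ.filter (fun i : Fin n => κ ≤ (i : ℕ)), pd f lam i * α i := by
    have h := hvsum
    rw [← hsplit, eP, eQ] at h
    linarith
  -- upper bound for the right sum
  have hYbound : ∑ i ∈ Finset.univ.filter (fun i : Fin n => κ ≤ (i : ℕ)), pd f lam i * α i
      ≤ pd f lam iκ * A := by
    rw [hA, Finset.mul_sum]
    refine Finset.sum_le_sum fun i hi => ?_
    have hκi : κ ≤ (i : ℕ) := (Finset.mem_filter.mp hi).2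
    have hle : iκ ≤ i := by rw [Fin.le_def]; exact hκi
    exact mul_le_mul_of_nonneg_right (hanti iκ i hle) (hαpos i).le
  -- split off the i0 term of the left sum
  have hmem0 : i0 ∈ Finset.univ.filter (fun i : Fin n => (i : ℕ) < κ) := by
    simp only [Finset.mem_filter, Finset.mem_univ, true_and, hi0def]
    omega
  have herase : (Finset.univ.filter (fun i : Fin n => (i : ℕ) < κ)).erase i0
      = Finset.univ.filter (fun i : Fin n => 1 ≤ (i : ℕ) ∧ (i : ℕ) < κ) := by
    ext i
    simp only [Finset.mem_erase, Finset.mem_filter, Finset.mem_univ, true_and, hi0def,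
      Ne, Fin.ext_iff]
    omega
  have hXsplit : ∑ i ∈ Finset.univ.filter (fun i : Fin n => (i : ℕ) < κ), pd f lam i * α i
      = pd f lam i0 * α i0
        + ∑ i ∈ Finset.univ.filter (fun i : Fin n => 1 ≤ (i : ℕ) ∧ (i : ℕ) < κ),
            pd f lam i * α i := by
    rw [← Finset.add_sum_erase _ _ hmem0, herase]
  have hBbound : pd f lam iκ * B
      ≤ ∑ i ∈ Finset.univ.filter (fun i : Fin n => 1 ≤ (i : ℕ) ∧ (i : ℕ) < κ),
          pd f lam i * α i := by
    rw [hB, Finset.mul_sum]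
    refine Finset.sum_le_sum fun i hi => ?_
    have hic : (i : ℕ) < κ := (Finset.mem_filter.mp hi).2.2
    have hle : i ≤ iκ := by rw [Fin.le_def]; simp only [hiκdef]; omega
    exact mul_le_mul_of_nonneg_right (hanti i iκ hle) (hαpos i).le
  have hmain : α i0 * pd f lam i0 ≤ (A - B) * pd f lam iκ := by
    have hexp : (A - B) * pd f lam iκ = pd f lam iκ * A - pd f lam iκ * B := by ring
    rw [hexp]
    linarith [hXY, hYbound, hXsplit, hBbound]
  rcases (hp i0).eq_or_lt with h0 | h0
  · show α i0 / (A - B) * pd f lam i0 ≤ pd f lam iκ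
    rw [← h0, mul_zero]
    exact hp iκ
  · have hprod : 0 < (A - B) * pd f lam iκ :=
      lt_of_lt_of_le (mul_pos (hαpos i0) h0) hmain
    have hκpos : 0 < pd f lam iκ := by
      rcases (hp iκ).eq_or_lt with h | h
      · rw [← h, mul_zero] at hprod; exact absurd hprod (lt_irrefl 0)
      · exact h
    have hD : 0 < A - B := by
      by_contra hc
      push_neg at hc
      exact absurd hprod (not_lt.mpr (mul_nonpos_iff.mpr (Or.inr ⟨hc, hp iκ⟩)))
    show α i0 / (A - B) * pd f lam i0 ≤ pd f lam iκ
    rw [div_mul_eq_mul_div, div_le_iff₀ hD]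
    linarith [hmain]
end

section
/- Under the hypotheses of the level-set partial uniform ellipticity theorem (f concave, symmetric, f_i ≥ 0, τ_σ finite), for every λ ∈ ∂Γ^σ and every index i with λ_i ≤ τ_σ, one has f_i(λ) ≥ ϑ_{Γ_{σ,f}} ∑_{j=1}^n f_j(λ), where ϑ_{Γ_{σ,f}} > 0 depends only on Γ_{σ,f}. In particular, if ∑_i f_i(λ)λ_i ≥ 0 on ∂Γ^σ, then f_i(λ) ≥ ϑ_{Γ_{σ,f}} ∑_j f_j(λ) whenever λ_i ≤ 0. -/
open Finset Filter Topology

section helpers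
variable {n : ℕ} {Γ : Set (Fin n → ℝ)} {f : (Fin n → ℝ) → ℝ}

lemma fderiv_apply_sum (x v : Fin n → ℝ) :
    fderiv ℝ f x v = ∑ j, pd f x j * v j := by
  have hv : v = ∑ j, v j • (Pi.single j 1 : Fin n → ℝ) := by
    funext k
    rw [Finset.sum_apply]
    simp [Pi.single_apply]
  conv_lhs => rw [hv]
  rw [map_sum]
  exact Finset.sum_congr rfl fun j _ => by
    rw [map_smul]; simp [pd, mul_comm]

lemma grad_ineq (hconc : ConcaveOn ℝ Γ f)
    (hdiff : ∀ x ∈ Γ, DifferentiableAt ℝ f x)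
    {x y : Fin n → ℝ} (hx : x ∈ Γ) (hy : y ∈ Γ) :
    f y - f x ≤ fderiv ℝ f x (y - x) := by
  set φ : ℝ → ℝ := fun t => f (x + t • (y - x)) with hφdef
  have hc : HasDerivAt (fun t : ℝ => x + t • (y - x)) (y - x) 0 := by
    simpa using ((hasDerivAt_id (0:ℝ)).smul_const (y - x)).const_add x
  have hF : HasFDerivAt f (fderiv ℝ f x) ((fun t : ℝ => x + t • (y - x)) 0) := by
    simpa using (hdiff x hx).hasFDerivAt
  have hD : HasDerivAt φ (fderiv ℝ f x (y - x)) 0 := hF.comp_hasDerivAt 0 hc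
  have hslope : Tendsto (slope φ 0) (𝓝[>] 0) (𝓝 (fderiv ℝ f x (y - x))) :=
    (hasDerivAt_iff_tendsto_slope.mp hD).mono_left
      (nhdsWithin_mono _ (fun t ht => ne_of_gt ht))
  refine ge_of_tendsto hslope ?_
  filter_upwards [Ioc_mem_nhdsGT_of_mem (by norm_num : (0:ℝ) ∈ Set.Ico 0 1)] with t ht
  have hcomb : (1 - t) • x + t • y = x + t • (y - x) := by
    funext k
    simp only [Pi.add_apply, Pi.smul_apply, Pi.sub_apply, smul_eq_mul]
    ring
  have hcc : (1 - t) * f x + t * f y ≤ φ t := by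
    have := hconc.2 hx hy (by linarith [ht.2] : (0:ℝ) ≤ 1 - t) (le_of_lt ht.1)
      (by ring : (1 - t) + t = 1)
    simpa [hφdef, hcomb, smul_eq_mul] using this
  have hφ0 : φ 0 = f x := by simp [hφdef]
  rw [slope_def_field, hφ0, sub_zero, le_div_iff₀ ht.1]
  nlinarith [hcc]

lemma pd_perm_eq (hopen : IsOpen Γ)
    (hΓsym : ∀ (g : Equiv.Perm (Fin n)), ∀ x ∈ Γ, x ∘ g ∈ Γ)
    (hfsym : ∀ (g : Equiv.Perm (Fin n)), ∀ x ∈ Γ, f (x ∘ g) = f x)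
    (hdiff : ∀ x ∈ Γ, DifferentiableAt ℝ f x)
    {lam : Fin n → ℝ} (hl : lam ∈ Γ) {i j : Fin n} (hij : lam i = lam j) :
    pd f lam i = pd f lam j := by
  rcases eq_or_ne i j with rfl | hne
  · rfl
  set g : Equiv.Perm (Fin n) := Equiv.swap i j with hgdef
  set T : (Fin n → ℝ) →L[ℝ] (Fin n → ℝ) :=
    LinearMap.toContinuousLinearMap (LinearMap.funLeft ℝ ℝ g) with hTdef
  have hTapp : ∀ v : Fin n → ℝ, T v = v ∘ g := fun v => rfl
  have hTlam : T lam = lam := by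
    funext k
    show lam (g k) = lam k
    rcases eq_or_ne k i with rfl | hki
    · rw [hgdef, Equiv.swap_apply_left]; exact hij.symm
    rcases eq_or_ne k j with rfl | hkj
    · rw [hgdef, Equiv.swap_apply_right]; exact hij
    · rw [hgdef, Equiv.swap_apply_of_ne_of_ne hki hkj]
  have hEq : (fun x => f (T x)) =ᶠ[𝓝 lam] f :=
    Filter.eventuallyEq_of_mem (hopen.mem_nhds hl) (fun x hx => hfsym g x hx)
  have h1 : fderiv ℝ (fun x => f (T x)) lam = fderiv ℝ f lam := hEq.fderiv_eq
  have h2 : fderiv ℝ (fun x => f (T x)) lam = (fderiv ℝ f (T lam)).comp T := by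
    have hdT : DifferentiableAt ℝ f (T lam) := by rw [hTlam]; exact hdiff lam hl
    have := fderiv_comp lam hdT T.differentiableAt
    rw [T.fderiv] at this
    exact this
  have h3 : fderiv ℝ f lam = (fderiv ℝ f lam).comp T := by
    rw [h2, hTlam] at h1
    exact h1.symm
  have hsingle : ((Pi.single i 1 : Fin n → ℝ) ∘ g) = (Pi.single j 1 : Fin n → ℝ) := by
    funext k
    have hgk : g k = i ↔ k = j := by
      rw [Equiv.apply_eq_iff_eq_symm_apply]
      simp [hgdef]
    show (Pi.single i 1 : Fin n → ℝ) (g k) = _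
    simp only [Pi.single_apply, hgk]
  calc pd f lam i = fderiv ℝ f lam (Pi.single i 1) := rfl
    _ = ((fderiv ℝ f lam).comp T) (Pi.single i 1) := by rw [← h3]
    _ = fderiv ℝ f lam ((Pi.single i 1 : Fin n → ℝ) ∘ g) := rfl
    _ = pd f lam j := by rw [hsingle]; rfl

lemma schur (hopen : IsOpen Γ) (hconc : ConcaveOn ℝ Γ f)
    (hΓsym : ∀ (g : Equiv.Perm (Fin n)), ∀ x ∈ Γ, x ∘ g ∈ Γ)
    (hfsym : ∀ (g : Equiv.Perm (Fin n)), ∀ x ∈ Γ, f (x ∘ g) = f x)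
    (hdiff : ∀ x ∈ Γ, DifferentiableAt ℝ f x)
    {lam : Fin n → ℝ} (hl : lam ∈ Γ) {i j : Fin n} (hij : lam i ≤ lam j) :
    pd f lam j ≤ pd f lam i := by
  rcases eq_or_lt_of_le hij with heq | hlt
  · exact le_of_eq (pd_perm_eq hopen hΓsym hfsym hdiff hl heq.symm)
  · have hne : i ≠ j := fun h => absurd hlt (by rw [h]; exact lt_irrefl _)
    have hy : lam ∘ Equiv.swap i j ∈ Γ := hΓsym _ lam hl
    have hfy : f (lam ∘ Equiv.swap i j) = f lam := hfsym _ lam hl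
    have h0 := grad_ineq hconc hdiff hl hy
    rw [hfy, sub_self] at h0
    have hvec : (lam ∘ Equiv.swap i j) - lam
        = (lam j - lam i) • ((Pi.single i 1 : Fin n → ℝ) - Pi.single j 1) := by
      funext k
      simp only [Pi.sub_apply, Function.comp_apply, Pi.smul_apply, smul_eq_mul]
      rcases eq_or_ne k i with rfl | hki
      · rw [Equiv.swap_apply_left]
        simp [Pi.single_apply, hne, hne.symm]
      rcases eq_or_ne k j with rfl | hkj
      · rw [Equiv.swap_apply_right]
        simp [Pi.single_apply, hne, hne.symm]
      · rw [Equiv.swap_apply_of_ne_of_ne hki hkj]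
        simp [Pi.single_apply, hki, hkj]
    rw [hvec, map_smul, map_sub] at h0
    have h0' : 0 ≤ (lam j - lam i) * (pd f lam i - pd f lam j) := by
      simpa [pd, smul_eq_mul] using h0
    nlinarith [h0', hlt]

lemma key_lb {σ τ : ℝ} (hτ1 : τ ∈ lowerBounds (tset Γ f σ))
    (hconc : ConcaveOn ℝ Γ f)
    (hdiff : ∀ x ∈ Γ, DifferentiableAt ℝ f x)
    (hpd : ∀ x ∈ Γ, ∀ i, 0 ≤ pd f x i)
    {lam lam' : Fin n → ℝ} (hl : lam ∈ Γ) (hfl : f lam = σ)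
    (hl' : lam' ∈ Γ) (hfl' : f lam' = σ) :
    τ * ∑ j, pd f lam j ≤ ∑ j, pd f lam j * lam' j := by
  have hsum0 : 0 ≤ ∑ j, pd f lam j := Finset.sum_nonneg fun j _ => hpd lam hl j
  have hstep1 : τ * ∑ j, pd f lam j ≤ ∑ j, pd f lam j * lam j := by
    have ht : τ ≤ (∑ k, pd f lam k * lam k) / (∑ k, pd f lam k) :=
      hτ1 ⟨lam, hl, hfl, rfl⟩
    rcases eq_or_lt_of_le hsum0 with h0 | hpos
    · have hz : ∀ j ∈ Finset.univ, pd f lam j = 0 :=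
        (Finset.sum_eq_zero_iff_of_nonneg (fun j _ => hpd lam hl j)).mp h0.symm
      have hz2 : ∑ j, pd f lam j * lam j = 0 :=
        Finset.sum_eq_zero fun j hj => by rw [hz j hj, zero_mul]
      rw [← h0, hz2, mul_zero]
    · exact (le_div_iff₀ hpos).mp ht
  have hstep2 : ∑ j, pd f lam j * lam j ≤ ∑ j, pd f lam j * lam' j := by
    have h0 := grad_ineq hconc hdiff hl hl'
    rw [fderiv_apply_sum lam (lam' - lam), hfl, hfl', sub_self] at h0
    have he : ∑ j, pd f lam j * (lam' - lam) j
        = ∑ j, pd f lam j * lam' j - ∑ j, pd f lam j * lam j := by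
      rw [← Finset.sum_sub_distrib]
      exact Finset.sum_congr rfl fun j _ => by simp [Pi.sub_apply]; ring
    rw [he] at h0
    linarith
  linarith

end helpers

theorem stmt5 {n : ℕ} (Γ : Set (Fin n → ℝ)) (f : (Fin n → ℝ) → ℝ)
    (hopen : IsOpen Γ) (hconv : Convex ℝ Γ)
    (hcone : ∀ x ∈ Γ, ∀ t : ℝ, 0 < t → t • x ∈ Γ)
    (horth : {x : Fin n → ℝ | ∀ i, 0 < x i} ⊆ Γ)
    (hΓsym : ∀ (g : Equiv.Perm (Fin n)), ∀ x ∈ Γ, x ∘ g ∈ Γ)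
    (hfsym : ∀ (g : Equiv.Perm (Fin n)), ∀ x ∈ Γ, f (x ∘ g) = f x)
    (hconc : ConcaveOn ℝ Γ f)
    (hsmooth : ContDiffOn ℝ (⊤ : ℕ∞) f Γ)
    (hdiff : ∀ x ∈ Γ, DifferentiableAt ℝ f x)
    (hpd : ∀ x ∈ Γ, ∀ i, 0 ≤ pd f x i)
    (σ : ℝ) (hσ : ∃ μ ∈ Γ, σ < f μ) (hne : ∃ x ∈ Γ, f x = σ)
    (τ : ℝ) (hτ : IsGLB (tset Γ f σ) τ) :
    ∃ ϑ : ℝ, 0 < ϑ ∧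
      (∀ lam ∈ Γ, f lam = σ → ∀ i : Fin n, lam i ≤ τ →
        ϑ * ∑ j, pd f lam j ≤ pd f lam i) ∧
      ((∀ lam ∈ Γ, f lam = σ → 0 ≤ ∑ i, pd f lam i * lam i) →
        ∀ lam ∈ Γ, f lam = σ → ∀ i : Fin n, lam i ≤ 0 →
          ϑ * ∑ j, pd f lam j ≤ pd f lam i) := by
  classical
  have key : ∀ i : Fin n, ∃ ϑ : ℝ, 0 < ϑ ∧ ∀ lam ∈ Γ, f lam = σ → lam i ≤ τ →
      ϑ * ∑ j, pd f lam j ≤ pd f lam i := by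
    intro i
    by_contra hcon
    push_neg at hcon
    have hcon' : ∀ k : ℕ, ∃ lam, lam ∈ Γ ∧ f lam = σ ∧ lam i ≤ τ ∧
        pd f lam i < (1 / (k + 1 : ℝ)) * ∑ j, pd f lam j := by
      intro k
      obtain ⟨lam, h1, h2, h3, h4⟩ := hcon (1 / (k + 1 : ℝ)) (by positivity)
      exact ⟨lam, h1, h2, h3, h4⟩
    choose lam hlΓ hlσ hli hlt using hcon'
    have hSpos : ∀ k, 0 < ∑ j, pd f (lam k) j := by
      intro k
      by_contra h
      push_neg at h
      have h1 : (1 / (k + 1 : ℝ)) * ∑ j, pd f (lam k) j ≤ 0 :=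
        mul_nonpos_iff.mpr (Or.inl ⟨by positivity, h⟩)
      exact absurd (hlt k) (not_lt.mpr (h1.trans (hpd _ (hlΓ k) i)))
    set g : ℕ → (Fin n → ℝ) := fun k j => pd f (lam k) j / ∑ m, pd f (lam k) m with hg
    have hgmem : ∀ k, g k ∈ stdSimplex ℝ (Fin n) := fun k =>
      ⟨fun j => div_nonneg (hpd _ (hlΓ k) j) (le_of_lt (hSpos k)),
        by rw [← Finset.sum_div]; exact div_self (hSpos k).ne'⟩
    obtain ⟨gs, hgs, φ, hφ, htend⟩ := (isCompact_stdSimplex ℝ (Fin n)).tendsto_subseq hgmem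
    have hcoord : ∀ j, Tendsto (fun k => g (φ k) j) atTop (𝓝 (gs j)) := by
      intro j
      exact ((continuous_apply j).tendsto gs).comp htend
    have hgsi : gs i = 0 := by
      have hub : ∀ k, g (φ k) i ≤ 1 / (k + 1 : ℝ) := by
        intro k
        have h1 := hlt (φ k)
        have h2 : g (φ k) i < 1 / (φ k + 1 : ℝ) :=
          (div_lt_iff₀ (hSpos (φ k))).mpr (by linarith [h1])
        have h3 : (1 : ℝ) / (φ k + 1) ≤ 1 / (k + 1) := by
          apply one_div_le_one_div_of_le (by positivity)
          have hk' : k ≤ φ k := hφ.le_apply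
          exact_mod_cast add_le_add_left (Nat.cast_le.mpr hk') (1:ℝ)
        linarith
      have h0 : Tendsto (fun k : ℕ => 1 / (k + 1 : ℝ)) atTop (𝓝 0) :=
        tendsto_one_div_add_atTop_nhds_zero_nat
      exact le_antisymm (le_of_tendsto_of_tendsto' (hcoord i) h0 hub) (hgs.1 i)
    have hlin : ∀ lam' ∈ Γ, f lam' = σ → 0 ≤ ∑ j, gs j * (lam' j - τ) := by
      intro lam' hl' hfl'
      have hk : ∀ k, 0 ≤ ∑ j, g (φ k) j * (lam' j - τ) := by
        intro k
        have h1 := key_lb hτ.1 hconc hdiff hpd (hlΓ (φ k)) (hlσ (φ k)) hl' hfl'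
        have hS := hSpos (φ k)
        have h2 : 0 ≤ ∑ j, pd f (lam (φ k)) j * (lam' j - τ) := by
          have he : ∑ j, pd f (lam (φ k)) j * (lam' j - τ)
              = ∑ j, pd f (lam (φ k)) j * lam' j - τ * ∑ j, pd f (lam (φ k)) j := by
            rw [Finset.mul_sum, ← Finset.sum_sub_distrib]
            exact Finset.sum_congr rfl fun j _ => by ring
          rw [he]
          linarith
        have he2 : ∑ j, g (φ k) j * (lam' j - τ)
            = (∑ j, pd f (lam (φ k)) j * (lam' j - τ)) / (∑ m, pd f (lam (φ k)) m) := by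
          rw [Finset.sum_div]
          exact Finset.sum_congr rfl fun j _ => div_mul_eq_mul_div _ _ _
        rw [he2]
        exact div_nonneg h2 (le_of_lt hS)
      have hcont : Tendsto (fun k => ∑ j, g (φ k) j * (lam' j - τ)) atTop
          (𝓝 (∑ j, gs j * (lam' j - τ))) := by
        apply tendsto_finset_sum
        intro j _
        exact (hcoord j).mul tendsto_const_nhds
      exact ge_of_tendsto hcont (Filter.Eventually.of_forall hk)
    obtain ⟨j0, hj0⟩ : ∃ j0, 0 < gs j0 := by
      by_contra h
      push_neg at h
      have hs : ∑ j, gs j ≤ 0 := Finset.sum_nonpos fun j _ => h j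
      rw [hgs.2] at hs
      linarith
    have hev : ∀ᶠ k in atTop, ∀ j, 0 < gs j → lam (φ k) j < τ := by
      rw [Filter.eventually_all]
      intro j
      by_cases hj : 0 < gs j
      · have h1 : ∀ᶠ k in atTop, g (φ k) i < g (φ k) j :=
          (hcoord i).eventually_lt (hcoord j) (by rw [hgsi]; exact hj)
        filter_upwards [h1] with k hk _
        by_contra hge
        push_neg at hge
        have h2 : pd f (lam (φ k)) j ≤ pd f (lam (φ k)) i :=
          schur hopen hconc hΓsym hfsym hdiff (hlΓ (φ k)) ((hli (φ k)).trans hge)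
        have h3 : g (φ k) j ≤ g (φ k) i :=
          div_le_div_of_nonneg_right h2 (le_of_lt (hSpos (φ k)))
        exact absurd h3 (not_le.mpr hk)
      · exact Filter.Eventually.of_forall fun k h => absurd h hj
    obtain ⟨k, hk⟩ := hev.exists
    have hfinal := hlin (lam (φ k)) (hlΓ (φ k)) (hlσ (φ k))
    have hneg : ∑ j, gs j * (lam (φ k) j - τ) < 0 := by
      have hlt0 : ∑ j, gs j * (lam (φ k) j - τ) < ∑ _j : Fin n, (0 : ℝ) := by
        apply Finset.sum_lt_sum
        · intro j _
          rcases lt_or_eq_of_le (hgs.1 j) with h | h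
          · exact le_of_lt (mul_neg_of_pos_of_neg h (sub_neg.mpr (hk j h)))
          · rw [← h, zero_mul]
        · exact ⟨j0, Finset.mem_univ j0,
            mul_neg_of_pos_of_neg hj0 (sub_neg.mpr (hk j0 hj0))⟩
      simpa using hlt0
    linarith
  rcases Nat.eq_zero_or_pos n with hn | hn
  · subst hn
    exact ⟨1, one_pos, fun lam _ _ i => i.elim0, fun _ lam _ _ i => i.elim0⟩
  · have hnonempty : Nonempty (Fin n) := Fin.pos_iff_nonempty.mp hn
    choose θ hθpos hθ using key
    have hune : (Finset.univ : Finset (Fin n)).Nonempty := Finset.univ_nonempty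
    have main1 : ∀ lam ∈ Γ, f lam = σ → ∀ i : Fin n, lam i ≤ τ →
        (Finset.univ.inf' hune θ) * ∑ j, pd f lam j ≤ pd f lam i := by
      intro lam hl hfl i hi
      have h1 : Finset.univ.inf' hune θ ≤ θ i := Finset.inf'_le _ (Finset.mem_univ i)
      have h2 := hθ i lam hl hfl hi
      have hs : 0 ≤ ∑ j, pd f lam j := Finset.sum_nonneg fun j _ => hpd lam hl j
      calc Finset.univ.inf' hune θ * ∑ j, pd f lam j
          ≤ θ i * ∑ j, pd f lam j := mul_le_mul_of_nonneg_right h1 hs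
        _ ≤ pd f lam i := h2
    refine ⟨Finset.univ.inf' hune θ, ?_, main1, ?_⟩
    · rw [Finset.lt_inf'_iff]
      exact fun j _ => hθpos j
    · intro hyp lam hl hfl i hi
      have hτ0 : (0:ℝ) ≤ τ := by
        apply hτ.2
        rintro t ⟨x, hx, hfx, rfl⟩
        exact div_nonneg (hyp x hx hfx) (Finset.sum_nonneg fun j _ => hpd x hx j)
      exact main1 lam hl hfl i (hi.trans hτ0)
end

section
/- Let f be a differentiable concave function on an open convex cone Γ ⊆ ℝⁿ satisfying limsup_{t→+∞} f(tλ)/t ≥ 0 for all λ ∈ Γ. Then ∑_{i=1}^n f_i(λ)μ_i ≥ 0 for all λ, μ ∈ Γ; in particular ∑_i f_i(λ)λ_i ≥ 0 for all λ ∈ Γ, and (if Γ contains the positive orthant) f_i(λ) ≥ 0 for all i and λ ∈ Γ. -/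
open Finset Filter Topology

/-! Concavity puts the graph of `f` below its tangent planes, so for `λ, μ ∈ Γ` and `t > 0`,
`f (t μ) ≤ f λ + Df(λ)(t μ - λ)`. Dividing by `t` and letting `t → ∞` gives
`Df(λ) μ ≥ limsup f (t μ) / t ≥ 0`. Each basis vector `eᵢ` is a limit of vectors with positive
coordinates, which lie in `Γ`, so by continuity `fᵢ(λ) = Df(λ) eᵢ ≥ 0` as well. -/

theorem nonneg_of_frequently_le_add_div {a c : ℝ}
    (h : ∀ ε : ℝ, 0 < ε → ∃ᶠ t : ℝ in atTop, -ε ≤ a + c / t) : 0 ≤ a := by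
  by_contra! ha
  have hsmall : ∀ᶠ t : ℝ in atTop, c / t < -a / 2 :=
    (tendsto_const_nhds.div_atTop tendsto_id).eventually (gt_mem_nhds (by linarith))
  obtain ⟨t, hle, hlt⟩ := ((h (-a / 2) (by linarith)).and_eventually hsmall).exists
  linarith

section
variable {E : Type*} [NormedAddCommGroup E] [NormedSpace ℝ E] {s : Set E} {f : E → ℝ}

theorem ConcaveOn.le_add_fderiv (hf : ConcaveOn ℝ s f) {x y : E} (hx : x ∈ s) (hy : y ∈ s)
    (hdx : DifferentiableAt ℝ f x) : f y ≤ f x + fderiv ℝ f x (y - x) := by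
  set γ : ℝ →ᵃ[ℝ] E := AffineMap.lineMap x y
  have hderiv : HasDerivAt (f ∘ γ) (fderiv ℝ f x (y - x)) 0 := by
    have hdx' : HasFDerivAt f (fderiv ℝ f x) (γ 0) := by simpa [γ] using hdx.hasFDerivAt
    exact hdx'.comp_hasDerivAt 0 AffineMap.hasDerivAt_lineMap
  have hslope := (hf.comp_affineMap γ).slope_le_of_hasDerivAt (x := 0) (y := 1)
    (by simpa [γ] using hx) (by simpa [γ] using hy) one_pos hderiv
  simp only [slope_def_field, Function.comp_apply, γ, AffineMap.lineMap_apply_zero,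
    AffineMap.lineMap_apply_one, sub_zero, div_one] at hslope
  linarith

theorem ConcaveOn.div_le_fderiv_add (hf : ConcaveOn ℝ s f)
    (hcone : ∀ x ∈ s, ∀ t : ℝ, 0 < t → t • x ∈ s) {x y : E} (hx : x ∈ s) (hy : y ∈ s)
    (hdx : DifferentiableAt ℝ f x) {t : ℝ} (ht : 0 < t) :
    f (t • y) / t ≤ fderiv ℝ f x y + (f x - fderiv ℝ f x x) / t := by
  have := hf.le_add_fderiv hx (hcone y hy t ht) hdx
  rw [map_sub, map_smul, smul_eq_mul] at this
  rw [div_le_iff₀ ht]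
  field_simp
  linarith

theorem ConcaveOn.fderiv_apply_nonneg (hf : ConcaveOn ℝ s f)
    (hcone : ∀ x ∈ s, ∀ t : ℝ, 0 < t → t • x ∈ s) {x y : E} (hx : x ∈ s) (hy : y ∈ s)
    (hdx : DifferentiableAt ℝ f x)
    (hgrowth : ∀ ε : ℝ, 0 < ε → ∃ᶠ t : ℝ in atTop, -ε ≤ f (t • y) / t) :
    0 ≤ fderiv ℝ f x y :=
  nonneg_of_frequently_le_add_div fun ε hε =>
    (hgrowth ε hε).mp <| (eventually_gt_atTop 0).mono fun _ ht hle =>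
      hle.trans (hf.div_le_fderiv_add hcone hx hy hdx ht)

end

theorem ContinuousLinearMap.apply_nonneg_of_forall_pos {ι : Type*} [Fintype ι]
    (L : (ι → ℝ) →L[ℝ] ℝ) (hL : ∀ v : ι → ℝ, (∀ i, 0 < v i) → 0 ≤ L v) {w : ι → ℝ}
    (hw : 0 ≤ w) : 0 ≤ L w := by
  have hlim : Tendsto (fun ε : ℝ => L (w + ε • 1)) (𝓝[>] 0) (𝓝 (L w)) := by
    have : Tendsto (fun ε : ℝ => w + ε • (1 : ι → ℝ)) (𝓝 0) (𝓝 w) := by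
      simpa using ((tendsto_id (x := 𝓝 (0 : ℝ))).smul_const (1 : ι → ℝ)).const_add w
    exact (L.continuous.tendsto w).comp (this.mono_left nhdsWithin_le_nhds)
  refine ge_of_tendsto hlim ?_
  filter_upwards [self_mem_nhdsWithin] with ε (hε : 0 < ε)
  exact hL _ fun i => add_pos_of_nonneg_of_pos (hw i) (by simpa using hε)

theorem sum_pd_mul {n : ℕ} (f : (Fin n → ℝ) → ℝ) (x v : Fin n → ℝ) :
    ∑ i, pd f x i * v i = fderiv ℝ f x v := by
  conv_rhs => rw [← Finset.univ_sum_single v, map_sum]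
  refine Finset.sum_congr rfl fun i _ => ?_
  have : Pi.single i (v i) = v i • Pi.single i (1 : ℝ) := by ext j; simp [Pi.single_apply]
  rw [this, map_smul, smul_eq_mul, pd, mul_comm]

theorem stmt10_general {n : ℕ} (Γ : Set (Fin n → ℝ)) (f : (Fin n → ℝ) → ℝ)
    (hcone : ∀ x ∈ Γ, ∀ t : ℝ, 0 < t → t • x ∈ Γ)
    (horth : {x : Fin n → ℝ | ∀ i, 0 < x i} ⊆ Γ)
    (hconc : ConcaveOn ℝ Γ f)
    (hdiff : ∀ x ∈ Γ, DifferentiableAt ℝ f x)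
    -- `limsup_{t→+∞} f(tλ)/t ≥ 0` for every `λ ∈ Γ`
    (hlimsup : ∀ lam ∈ Γ, ∀ ε : ℝ, 0 < ε → ∃ᶠ t : ℝ in atTop, -ε ≤ f (t • lam) / t) :
    (∀ lam ∈ Γ, ∀ μ ∈ Γ, 0 ≤ ∑ i, pd f lam i * μ i) ∧
    (∀ lam ∈ Γ, 0 ≤ ∑ i, pd f lam i * lam i) ∧
    (∀ lam ∈ Γ, ∀ i : Fin n, 0 ≤ pd f lam i) := by
  have hpair : ∀ lam ∈ Γ, ∀ μ ∈ Γ, 0 ≤ fderiv ℝ f lam μ := fun lam hlam μ hμ =>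
    hconc.fderiv_apply_nonneg hcone hlam hμ (hdiff lam hlam) (hlimsup μ hμ)
  refine ⟨fun lam hlam μ hμ => ?_, fun lam hlam => ?_, fun lam hlam i => ?_⟩
  · simpa only [sum_pd_mul] using hpair lam hlam μ hμ
  · simpa only [sum_pd_mul] using hpair lam hlam lam hlam
  · exact (fderiv ℝ f lam).apply_nonneg_of_forall_pos
      (fun v hv => hpair lam hlam v (horth hv)) (Pi.single_nonneg.2 zero_le_one)

theorem stmt10 {n : ℕ} (Γ : Set (Fin n → ℝ)) (f : (Fin n → ℝ) → ℝ)
    (hopen : IsOpen Γ) (hconv : Convex ℝ Γ)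
    (hcone : ∀ x ∈ Γ, ∀ t : ℝ, 0 < t → t • x ∈ Γ)
    (horth : {x : Fin n → ℝ | ∀ i, 0 < x i} ⊆ Γ)
    (hconc : ConcaveOn ℝ Γ f)
    (hdiff : ∀ x ∈ Γ, DifferentiableAt ℝ f x)
    -- `limsup_{t→+∞} f(tλ)/t ≥ 0` for every `λ ∈ Γ`
    (hlimsup : ∀ lam ∈ Γ, ∀ ε : ℝ, 0 < ε → ∃ᶠ t : ℝ in atTop, -ε ≤ f (t • lam) / t) :
    (∀ lam ∈ Γ, ∀ μ ∈ Γ, 0 ≤ ∑ i, pd f lam i * μ i) ∧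
    (∀ lam ∈ Γ, 0 ≤ ∑ i, pd f lam i * lam i) ∧
    (∀ lam ∈ Γ, ∀ i : Fin n, 0 ≤ pd f lam i) :=
  stmt10_general Γ f hcone horth hconc hdiff hlimsup
end

section
/- Let f be a differentiable concave function on an open convex cone Γ ⊆ ℝⁿ with ∑_{i=1}^n f_i(λ) > 0 for all λ ∈ Γ. Then the following are equivalent: (i) lim_{t→+∞} f(tλ) > f(μ) for all λ, μ ∈ Γ; (ii) lim_{t→+∞} f(tλ) > −∞ for all λ ∈ Γ; (iii) limsup_{t→+∞} f(tλ)/t ≥ 0 for all λ ∈ Γ; (iv) ∑_i f_i(λ)μ_i ≥ 0 for all λ, μ ∈ Γ; (v) ∑_i f_i(λ)λ_i ≥ 0 for all λ ∈ Γ. -/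
open Finset Filter Topology

/-- The derivative applied to a vector is the sum of partials. -/
lemma myaux_fderiv_eq_sum {n : ℕ} (f : (Fin n → ℝ) → ℝ) (x v : Fin n → ℝ) :
    fderiv ℝ f x v = ∑ i, pd f x i * v i := by
  have hv : v = ∑ i, v i • (Pi.single i (1:ℝ) : Fin n → ℝ) := by
    funext j
    rw [Finset.sum_apply]
    simp [Pi.single_apply]
  conv_lhs => rw [hv]
  rw [map_sum]
  refine Finset.sum_congr rfl fun i _ => ?_
  rw [map_smul]
  simp [pd, mul_comm]

/-- Gradient inequality for concave functions. -/
lemma myaux_grad_ineq {n : ℕ} {Γ : Set (Fin n → ℝ)} {f : (Fin n → ℝ) → ℝ}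
    (hconc : ConcaveOn ℝ Γ f) {x y : Fin n → ℝ}
    (hx : x ∈ Γ) (hy : y ∈ Γ) (hd : DifferentiableAt ℝ f x) :
    f y ≤ f x + fderiv ℝ f x (y - x) := by
  set L : ℝ → (Fin n → ℝ) := fun θ => x + θ • (y - x) with hL
  have hmem : ∀ θ : ℝ, θ ∈ Set.Icc (0:ℝ) 1 → L θ ∈ Γ := by
    intro θ hθ
    have h := hconc.1 hx hy (by linarith [hθ.1, hθ.2] : (0:ℝ) ≤ 1 - θ) hθ.1 (by ring)
    have : (1 - θ) • x + θ • y = L θ := by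
      simp only [hL]; module
    rwa [this] at h
  have hg : ConvexOn ℝ (Set.Icc (0:ℝ) 1) (fun θ => -f (L θ)) := by
    refine ⟨convex_Icc 0 1, fun a ha b hb p q hp hq hpq => ?_⟩
    have hcomb : L (p * a + q * b) = p • L a + q • L b := by
      simp only [hL]
      have : p • (x + a • (y - x)) + q • (x + b • (y - x))
          = (p + q) • x + (p * a + q * b) • (y - x) := by module
      rw [this, hpq, one_smul]
    have := hconc.2 (hmem a ha) (hmem b hb) hp hq hpq
    simp only [smul_eq_mul] at this ⊢
    rw [hcomb]
    nlinarith [this]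
  have hline : HasDerivAt L (y - x) 0 := by
    have h1 : HasDerivAt (fun θ : ℝ => θ • (y - x)) ((1:ℝ) • (y - x)) 0 :=
      (hasDerivAt_id (0:ℝ)).smul_const (y - x)
    simpa [hL] using h1.const_add x
  have hL0 : L 0 = x := by simp [hL]
  have hfd : HasDerivAt (fun θ => f (L θ)) (fderiv ℝ f x (y - x)) 0 := by
    have hd' : DifferentiableAt ℝ f (L 0) := by rwa [hL0]
    have h := hd'.hasFDerivAt.comp_hasDerivAt (0:ℝ) hline
    rw [hL0] at h
    exact h
  have hder : HasDerivAt (fun θ => -f (L θ)) (-(fderiv ℝ f x (y - x))) 0 := hfd.neg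
  have hslope := hg.le_slope_of_hasDerivAt (Set.left_mem_Icc.2 zero_le_one)
    (Set.right_mem_Icc.2 zero_le_one) zero_lt_one hder
  rw [slope_def_field] at hslope
  have hL1 : L 1 = y := by simp [hL]
  rw [hL0, hL1] at hslope
  have : -(fderiv ℝ f x (y - x)) ≤ -f y + f x := by
    have h1 : (-f y - -f x) / (1 - 0) = -f y + f x := by ring
    linarith [h1 ▸ hslope]
  linarith



theorem stmt12 {n : ℕ} (Γ : Set (Fin n → ℝ)) (f : (Fin n → ℝ) → ℝ)
    (hopen : IsOpen Γ) (hconv : Convex ℝ Γ)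
    (hcone : ∀ x ∈ Γ, ∀ t : ℝ, 0 < t → t • x ∈ Γ)
    (horth : {x : Fin n → ℝ | ∀ i, 0 < x i} ⊆ Γ)
    (hconc : ConcaveOn ℝ Γ f)
    (hdiff : ∀ x ∈ Γ, DifferentiableAt ℝ f x)
    (hsum : ∀ x ∈ Γ, 0 < ∑ i, pd f x i) :
    -- (i)
    ((∀ lam ∈ Γ, ∀ μ ∈ Γ, ∀ᶠ t : ℝ in atTop, f μ < f (t • lam)) ↔
      -- (ii)
      (∀ lam ∈ Γ, ∃ c : ℝ, ∀ᶠ t : ℝ in atTop, c ≤ f (t • lam))) ∧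
    ((∀ lam ∈ Γ, ∃ c : ℝ, ∀ᶠ t : ℝ in atTop, c ≤ f (t • lam)) ↔
      -- (iii)
      (∀ lam ∈ Γ, ∀ ε : ℝ, 0 < ε → ∃ᶠ t : ℝ in atTop, -ε ≤ f (t • lam) / t)) ∧
    ((∀ lam ∈ Γ, ∀ ε : ℝ, 0 < ε → ∃ᶠ t : ℝ in atTop, -ε ≤ f (t • lam) / t) ↔
      -- (iv)
      (∀ lam ∈ Γ, ∀ μ ∈ Γ, 0 ≤ ∑ i, pd f lam i * μ i)) ∧
    ((∀ lam ∈ Γ, ∀ μ ∈ Γ, 0 ≤ ∑ i, pd f lam i * μ i) ↔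
      -- (v)
      (∀ lam ∈ Γ, 0 ≤ ∑ i, pd f lam i * lam i)) := by
  -- closure under addition
  have hadd : ∀ x ∈ Γ, ∀ y ∈ Γ, x + y ∈ Γ := by
    intro x hx y hy
    have hm : (1/2 : ℝ) • x + (1/2 : ℝ) • y ∈ Γ :=
      hconv hx hy (by norm_num) (by norm_num) (by norm_num)
    have h2 := hcone _ hm 2 (by norm_num)
    have he : (2:ℝ) • ((1/2 : ℝ) • x + (1/2 : ℝ) • y) = x + y := by module
    rwa [he] at h2
  -- gradient inequality in coordinates
  have hgrad : ∀ x ∈ Γ, ∀ y ∈ Γ, f y ≤ f x + ∑ i, pd f x i * (y i - x i) := by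
    intro x hx y hy
    have h := myaux_grad_ineq hconc hx hy (hdiff x hx)
    rw [myaux_fderiv_eq_sum] at h
    simpa [Pi.sub_apply] using h
  -- (i) → (ii)
  have h12 : (∀ lam ∈ Γ, ∀ μ ∈ Γ, ∀ᶠ t : ℝ in atTop, f μ < f (t • lam)) →
      (∀ lam ∈ Γ, ∃ c : ℝ, ∀ᶠ t : ℝ in atTop, c ≤ f (t • lam)) := by
    intro h1 lam hlam
    exact ⟨f lam, (h1 lam hlam lam hlam).mono fun t ht => le_of_lt ht⟩
  -- (ii) → (iii)
  have h23 : (∀ lam ∈ Γ, ∃ c : ℝ, ∀ᶠ t : ℝ in atTop, c ≤ f (t • lam)) →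
      (∀ lam ∈ Γ, ∀ ε : ℝ, 0 < ε → ∃ᶠ t : ℝ in atTop, -ε ≤ f (t • lam) / t) := by
    intro h2 lam hlam ε hε
    obtain ⟨c, hc⟩ := h2 lam hlam
    refine ((hc.and (eventually_ge_atTop (max 1 (|c|/ε)))).mono ?_).frequently
    rintro t ⟨hct, hmt⟩
    have ht1 : 1 ≤ t := le_trans (le_max_left _ _) hmt
    have ht0 : 0 < t := by linarith
    have ht2 : |c|/ε ≤ t := le_trans (le_max_right _ _) hmt
    rw [le_div_iff₀ ht0]
    have hmul := mul_le_mul_of_nonneg_right ht2 hε.le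
    rw [div_mul_cancel₀ _ hε.ne'] at hmul
    have habs : -|c| ≤ c := neg_abs_le c
    nlinarith
  -- (iii) → (iv)
  have h34 : (∀ lam ∈ Γ, ∀ ε : ℝ, 0 < ε → ∃ᶠ t : ℝ in atTop, -ε ≤ f (t • lam) / t) →
      (∀ lam ∈ Γ, ∀ μ ∈ Γ, 0 ≤ ∑ i, pd f lam i * μ i) := by
    intro h3 lam hlam μ hμ
    by_contra hneg
    push_neg at hneg
    set δ : ℝ := -∑ i, pd f lam i * μ i with hδdef
    have hδ : 0 < δ := by rw [hδdef]; linarith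
    set K : ℝ := f lam - ∑ i, pd f lam i * lam i with hKdef
    have hub : ∀ t : ℝ, 0 < t → f (t • μ) ≤ K - t * δ := by
      intro t ht
      have h := hgrad lam hlam _ (hcone μ hμ t ht)
      have key : ∑ i, pd f lam i * ((t • μ) i - lam i)
          = t * (∑ i, pd f lam i * μ i) - ∑ i, pd f lam i * lam i := by
        rw [Finset.mul_sum, ← Finset.sum_sub_distrib]
        refine Finset.sum_congr rfl fun i _ => ?_
        simp only [Pi.smul_apply, smul_eq_mul]
        ring
      rw [key] at h
      have hS : t * (∑ i, pd f lam i * μ i) = -(t * δ) := by rw [hδdef]; ring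
      rw [hS] at h
      rw [hKdef]
      linarith
    have hev : ∀ᶠ t : ℝ in atTop, f (t • μ) / t < -(δ/2) := by
      filter_upwards [eventually_ge_atTop (max 1 (2 * |K| / δ + 1))] with t ht
      have ht1 : 1 ≤ t := le_trans (le_max_left _ _) ht
      have ht0 : 0 < t := by linarith
      have ht2 : 2 * |K| / δ + 1 ≤ t := le_trans (le_max_right _ _) ht
      rw [div_lt_iff₀ ht0]
      have hu := hub t ht0
      have habs : K ≤ |K| := le_abs_self K
      have hmul := mul_le_mul_of_nonneg_right ht2 hδ.le
      have hdiv : 2 * |K| / δ * δ = 2 * |K| := div_mul_cancel₀ _ hδ.ne'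
      nlinarith
    obtain ⟨t, ht1, ht2⟩ := ((h3 μ hμ (δ/2) (by linarith)).and_eventually hev).exists
    linarith
  -- (iv) → (i)
  have h41 : (∀ lam ∈ Γ, ∀ μ ∈ Γ, 0 ≤ ∑ i, pd f lam i * μ i) →
      (∀ lam ∈ Γ, ∀ μ ∈ Γ, ∀ᶠ t : ℝ in atTop, f μ < f (t • lam)) := by
    intro h4 lam hlam μ hμ
    set v : Fin n → ℝ := μ + fun _ => (1:ℝ) with hv
    have htend : Tendsto (fun t : ℝ => lam - t⁻¹ • v) atTop (𝓝 lam) := by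
      have h1 : Tendsto (fun t : ℝ => t⁻¹ • v) atTop (𝓝 ((0:ℝ) • v)) :=
        tendsto_inv_atTop_zero.smul_const v
      simpa using tendsto_const_nhds.sub h1
    filter_upwards [htend.eventually (hopen.mem_nhds hlam), eventually_gt_atTop 0] with t hmem ht
    have htlam : t • lam ∈ Γ := hcone lam hlam t ht
    have hν : t • lam - v ∈ Γ := by
      have h := hcone _ hmem t ht
      have he : t • (lam - t⁻¹ • v) = t • lam - v := by
        rw [smul_sub, smul_inv_smul₀ ht.ne']
      rwa [he] at h
    have h := hgrad _ htlam μ hμ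
    have h4' := h4 _ htlam _ hν
    have hs := hsum _ htlam
    have key : ∑ i, pd f (t • lam) i * (μ i - (t • lam) i)
        = -(∑ i, pd f (t • lam) i * (t • lam - v) i) - ∑ i, pd f (t • lam) i := by
      have hterm : ∀ i ∈ Finset.univ, pd f (t • lam) i * (μ i - (t • lam) i)
          = -(pd f (t • lam) i * (t • lam - v) i) - pd f (t • lam) i := by
        intro i _
        simp only [hv, Pi.sub_apply, Pi.add_apply, Pi.smul_apply, smul_eq_mul]
        ring
      rw [Finset.sum_congr rfl hterm, Finset.sum_sub_distrib, Finset.sum_neg_distrib]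
    rw [key] at h
    linarith
  -- (iv) → (v)
  have h45 : (∀ lam ∈ Γ, ∀ μ ∈ Γ, 0 ≤ ∑ i, pd f lam i * μ i) →
      (∀ lam ∈ Γ, 0 ≤ ∑ i, pd f lam i * lam i) :=
    fun h lam hlam => h lam hlam lam hlam
  -- (v) → (iv)
  have h54 : (∀ lam ∈ Γ, 0 ≤ ∑ i, pd f lam i * lam i) →
      (∀ lam ∈ Γ, ∀ μ ∈ Γ, 0 ≤ ∑ i, pd f lam i * μ i) := by
    intro h5 lam hlam μ hμ
    by_contra hneg
    push_neg at hneg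
    set δ : ℝ := -∑ i, pd f lam i * μ i with hδdef
    have hδ : 0 < δ := by rw [hδdef]; linarith
    set m : ℝ := min (f (lam + μ)) (f μ) with hm
    obtain ⟨s, hs1, hsbig⟩ : ∃ s : ℝ, 1 ≤ s ∧ f lam - m < s * δ := by
      refine ⟨max 1 ((f lam - m)/δ + 1), le_max_left _ _, ?_⟩
      have h1 : (f lam - m)/δ + 1 ≤ max 1 ((f lam - m)/δ + 1) := le_max_right _ _
      have h2 : (f lam - m)/δ * δ = f lam - m := div_mul_cancel₀ _ hδ.ne'
      nlinarith [mul_le_mul_of_nonneg_right h1 hδ.le]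
    have hs0 : (0:ℝ) < s := by linarith
    have hsinvpos : (0:ℝ) < s⁻¹ := by positivity
    have hsinv1 : s⁻¹ ≤ 1 := by
      have hc : s⁻¹ * s = 1 := inv_mul_cancel₀ hs0.ne'
      nlinarith [mul_le_mul_of_nonneg_left hs1 hsinvpos.le]
    have hp : lam + s • μ ∈ Γ := hadd lam hlam _ (hcone μ hμ s hs0)
    -- upper bound for f at lam + s • μ
    have hub : f (lam + s • μ) ≤ f lam - s * δ := by
      have h := hgrad lam hlam _ hp
      have key : ∑ i, pd f lam i * ((lam + s • μ) i - lam i)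
          = s * ∑ i, pd f lam i * μ i := by
        rw [Finset.mul_sum]
        refine Finset.sum_congr rfl fun i _ => ?_
        simp only [Pi.add_apply, Pi.smul_apply, smul_eq_mul]
        ring
      rw [key] at h
      have hS : s * ∑ i, pd f lam i * μ i = -(s * δ) := by rw [hδdef]; ring
      rw [hS] at h
      linarith
    have hq : s⁻¹ • (lam + s • μ) ∈ Γ := hcone _ hp s⁻¹ hsinvpos
    -- scaling down decreases f, by (v)
    have hqp : f (s⁻¹ • (lam + s • μ)) ≤ f (lam + s • μ) := by
      have h := hgrad _ hp _ hq
      have key : ∑ i, pd f (lam + s • μ) i * ((s⁻¹ • (lam + s • μ)) i - (lam + s • μ) i)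
          = (s⁻¹ - 1) * ∑ i, pd f (lam + s • μ) i * (lam + s • μ) i := by
        rw [Finset.mul_sum]
        refine Finset.sum_congr rfl fun i _ => ?_
        simp only [Pi.smul_apply, smul_eq_mul]
        ring
      rw [key] at h
      have h5p := h5 _ hp
      nlinarith
    -- lower bound via concavity
    have hlow : m ≤ f (s⁻¹ • (lam + s • μ)) := by
      have ha : (0:ℝ) ≤ s⁻¹ := hsinvpos.le
      have hb : (0:ℝ) ≤ 1 - s⁻¹ := by linarith
      have hsum1 : s⁻¹ + (1 - s⁻¹) = 1 := by ring
      have hc := hconc.2 (hadd lam hlam μ hμ) hμ ha hb hsum1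
      have key : s⁻¹ • (lam + μ) + (1 - s⁻¹) • μ = s⁻¹ • (lam + s • μ) := by
        have h1 : s⁻¹ • (lam + s • μ) = s⁻¹ • lam + s⁻¹ • (s • μ) := smul_add _ _ _
        rw [h1, inv_smul_smul₀ hs0.ne']
        module
      rw [key] at hc
      have hmin : m ≤ s⁻¹ * f (lam + μ) + (1 - s⁻¹) * f μ := by
        have h1 : m ≤ f (lam + μ) := min_le_left _ _
        have h2 : m ≤ f μ := min_le_right _ _
        nlinarith
      simp only [smul_eq_mul] at hc
      linarith
    linarith
  exact ⟨⟨h12, fun h => h41 (h34 (h23 h))⟩,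
    ⟨h23, fun h => h12 (h41 (h34 h))⟩,
    ⟨h34, fun h => h23 (h12 (h41 h))⟩,
    ⟨h45, h54⟩⟩
end

section
/- Let f be a differentiable symmetric concave function on an open symmetric convex cone Γ ⊆ ℝⁿ. Then for any λ ∈ Γ with λ_1 ≤ λ_2 ≤ ⋯ ≤ λ_n, the partial derivatives satisfy f_1(λ) ≥ f_2(λ) ≥ ⋯ ≥ f_n(λ), and in particular f_1(λ) ≥ (1/n) ∑_{i=1}^n f_i(λ). -/
/-!
Transposing two coordinates `i < j` of `λ` preserves both `Γ` and `f`, so the gradient inequality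
of the concave `f` along the chord from `λ` to its transpose gives `(λ_j - λ_i)(f_i - f_j) ≥ 0`,
i.e. `f_i ≥ f_j` when `λ_i < λ_j`. When `λ_i = λ_j` the transposition fixes `λ`, and invariance
of `f` on a neighbourhood of `λ` makes the differential invariant too, so `f_i = f_j`.
The mean of the `f_i` is then at most the largest one, `f_1`.
-/

open Finset Filter Topology

lemma ConcaveOn.sub_le_fderiv_sub {E : Type*} [NormedAddCommGroup E] [NormedSpace ℝ E]
    {s : Set E} {f : E → ℝ} (hf : ConcaveOn ℝ s f) {x y : E} (hx : x ∈ s) (hy : y ∈ s)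
    (hd : DifferentiableAt ℝ f x) :
    f y - f x ≤ fderiv ℝ f x (y - x) := by
  let A : ℝ →ᵃ[ℝ] E := AffineMap.lineMap x y
  have hA : HasDerivAt A (y - x) 0 := by
    simpa using AffineMap.hasDerivAt_lineMap (a := x) (b := y) (x := (0 : ℝ))
  have hfA : HasDerivAt (f ∘ A) (fderiv ℝ f x (y - x)) 0 :=
    (by simpa [A] using hd.hasFDerivAt : HasFDerivAt f (fderiv ℝ f x) (A 0)).comp_hasDerivAt 0 hA
  have h := (hf.comp_affineMap A).slope_le_of_hasDerivAt (x := 0) (y := 1)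
    (by simpa [A] using hx) (by simpa [A] using hy) one_pos hfA
  simpa [slope_def_field, A] using h

theorem Function.comp_swap_sub {ι R : Type*} [DecidableEq ι] [Ring R] (x : ι → R) (i j : ι) :
    x ∘ Equiv.swap i j - x = (x j - x i) • (Pi.single i 1 - Pi.single j 1) := by
  ext k
  rcases eq_or_ne k i with rfl | hki
  · rcases eq_or_ne k j with rfl | hkj <;> simp [*]
  · rcases eq_or_ne k j with rfl | hkj
    · simp [hki]
    · simp [Equiv.swap_apply_of_ne_of_ne hki hkj, hki, hkj]

lemma fderiv_apply_comp_perm {ι : Type*} [Fintype ι] {f : (ι → ℝ) → ℝ} {x : ι → ℝ}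
    (σ : Equiv.Perm ι) (hx : x ∘ σ = x) (hf : (fun y => f (y ∘ σ)) =ᶠ[𝓝 x] f) (v : ι → ℝ) :
    fderiv ℝ f x (v ∘ σ) = fderiv ℝ f x v := by
  let e := (LinearEquiv.funCongrLeft ℝ ℝ σ).toContinuousLinearEquiv
  have h := e.comp_right_fderiv (f := f) (x := x)
  have hex : e x = x := hx
  rw [hex, show f ∘ e = fun y => f (y ∘ σ) from rfl, hf.fderiv_eq] at h
  exact (congrArg (· v) h).symm

lemma pd_eq_of_apply_eq {n : ℕ} {f : (Fin n → ℝ) → ℝ} {x : Fin n → ℝ} {i j : Fin n}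
    (hf : (fun y => f (y ∘ Equiv.swap i j)) =ᶠ[𝓝 x] f) (hij : x i = x j) :
    pd f x i = pd f x j := by
  have hx : x ∘ Equiv.swap i j = x := by
    rw [← sub_eq_zero, Function.comp_swap_sub, hij, sub_self, zero_smul]
  simpa [pd, Pi.single_comp_equiv] using fderiv_apply_comp_perm _ hx hf (Pi.single j 1)

lemma ConcaveOn.mul_pd_sub_pd_nonneg {n : ℕ} {s : Set (Fin n → ℝ)} {f : (Fin n → ℝ) → ℝ}
    (hf : ConcaveOn ℝ s f) {x : Fin n → ℝ} (hx : x ∈ s) (hd : DifferentiableAt ℝ f x)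
    {i j : Fin n} (hs : x ∘ Equiv.swap i j ∈ s) (hfs : f (x ∘ Equiv.swap i j) = f x) :
    0 ≤ (x j - x i) * (pd f x i - pd f x j) := by
  have h := hf.sub_le_fderiv_sub hx hs hd
  rwa [hfs, sub_self, Function.comp_swap_sub, map_smul, map_sub] at h

theorem ConcaveOn.antitone_pd {n : ℕ} {s : Set (Fin n → ℝ)} {f : (Fin n → ℝ) → ℝ}
    (hf : ConcaveOn ℝ s f) (hs : IsOpen s) (hs_perm : ∀ σ : Equiv.Perm (Fin n), ∀ x ∈ s, x ∘ σ ∈ s)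
    (hf_perm : ∀ σ : Equiv.Perm (Fin n), ∀ x ∈ s, f (x ∘ σ) = f x)
    {x : Fin n → ℝ} (hx : x ∈ s) (hd : DifferentiableAt ℝ f x) (hmono : Monotone x) :
    Antitone (pd f x) := by
  intro i j hij
  rcases (hmono hij).eq_or_lt with heq | hlt
  · have hf_swap : (fun y => f (y ∘ Equiv.swap i j)) =ᶠ[𝓝 x] f :=
      eventually_of_mem (hs.mem_nhds hx) (hf_perm _)
    exact (pd_eq_of_apply_eq hf_swap heq).ge
  · have h := hf.mul_pd_sub_pd_nonneg hx hd (hs_perm (.swap i j) x hx) (hf_perm (.swap i j) x hx)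
    exact sub_nonneg.mp (nonneg_of_mul_nonneg_right h (sub_pos.mpr hlt))

theorem stmt17_general {n : ℕ} (hn : 0 < n) (Γ : Set (Fin n → ℝ)) (f : (Fin n → ℝ) → ℝ)
    (hopen : IsOpen Γ)
    (hΓsym : ∀ (g : Equiv.Perm (Fin n)), ∀ x ∈ Γ, x ∘ g ∈ Γ)
    (hfsym : ∀ (g : Equiv.Perm (Fin n)), ∀ x ∈ Γ, f (x ∘ g) = f x)
    (hconc : ConcaveOn ℝ Γ f)
    (hdiff : ∀ x ∈ Γ, DifferentiableAt ℝ f x)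
    (lam : Fin n → ℝ) (hlam : lam ∈ Γ)
    (hsort : ∀ i j : Fin n, i ≤ j → lam i ≤ lam j) :
    (∀ i j : Fin n, i ≤ j → pd f lam j ≤ pd f lam i) ∧
    (1 / (n : ℝ)) * ∑ i, pd f lam i ≤ pd f lam ⟨0, hn⟩ := by
  have hanti : Antitone (pd f lam) :=
    hconc.antitone_pd hopen hΓsym hfsym hlam (hdiff lam hlam) hsort
  refine ⟨fun i j hij => hanti hij, ?_⟩
  have hsum : ∑ i, pd f lam i ≤ n * pd f lam ⟨0, hn⟩ := by
    simpa using Finset.sum_le_card_nsmul univ (pd f lam) _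
      fun i _ => hanti (Nat.zero_le i)
  rw [one_div_mul_eq_div, div_le_iff₀ (by exact_mod_cast hn)]
  linarith

theorem stmt17 {n : ℕ} (hn : 0 < n) (Γ : Set (Fin n → ℝ)) (f : (Fin n → ℝ) → ℝ)
    (hopen : IsOpen Γ) (hconv : Convex ℝ Γ)
    (hcone : ∀ x ∈ Γ, ∀ t : ℝ, 0 < t → t • x ∈ Γ)
    (hΓsym : ∀ (g : Equiv.Perm (Fin n)), ∀ x ∈ Γ, x ∘ g ∈ Γ)
    (hfsym : ∀ (g : Equiv.Perm (Fin n)), ∀ x ∈ Γ, f (x ∘ g) = f x)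
    (hconc : ConcaveOn ℝ Γ f)
    (hdiff : ∀ x ∈ Γ, DifferentiableAt ℝ f x)
    (lam : Fin n → ℝ) (hlam : lam ∈ Γ)
    (hsort : ∀ i j : Fin n, i ≤ j → lam i ≤ lam j) :
    (∀ i j : Fin n, i ≤ j → pd f lam j ≤ pd f lam i) ∧
    (1 / (n : ℝ)) * ∑ i, pd f lam i ≤ pd f lam ⟨0, hn⟩ :=
  stmt17_general hn Γ f hopen hΓsym hfsym hconc hdiff lam hlam hsort
end

section
/- Let f be a smooth symmetric concave function on Γ with f_i ≥ 0, and suppose ∑_i f_i(λ)λ_i ≥ −K ∑_i f_i(λ) for some K ≥ 0 on the level set ∂Γ^σ. Then there exists θ(σ) > 0 such that ∑_{i=1}^n f_i(λ) ≥ θ(σ) for all λ ∈ ∂Γ^σ. -/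
open Finset Filter Topology

/-- Gradient inequality for concave functions. -/
lemma grad_ineq_s19 {E : Type*} [NormedAddCommGroup E] [NormedSpace ℝ E]
    {Γ : Set E} {f : E → ℝ} (hconc : ConcaveOn ℝ Γ f)
    {x μ : E} (hx : x ∈ Γ) (hμ : μ ∈ Γ) (hd : DifferentiableAt ℝ f x) :
    f μ - f x ≤ fderiv ℝ f x (μ - x) := by
  set v := μ - x with hv
  have h1 : HasDerivAt (fun t : ℝ => f (x + t • v)) (fderiv ℝ f x v) 0 := by
    have hg : HasDerivAt (fun t : ℝ => x + t • v) v 0 := by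
      simpa using ((hasDerivAt_id (0:ℝ)).smul_const v).const_add x
    have hfd : HasFDerivAt f (fderiv ℝ f x) ((fun t : ℝ => x + t • v) 0) := by
      simpa using hd.hasFDerivAt
    exact hfd.comp_hasDerivAt 0 hg
  have hslope : ∀ t ∈ Set.Ioc (0:ℝ) 1,
      f μ - f x ≤ slope (fun t : ℝ => f (x + t • v)) 0 t := by
    intro t ht
    have h2 : (1 - t) • x + t • μ = x + t • v := by
      rw [hv]; module
    have h3 := hconc.2 hx hμ (by linarith [ht.2] : (0:ℝ) ≤ 1 - t) ht.1.le (by ring)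
    rw [h2] at h3
    simp only [smul_eq_mul] at h3
    rw [slope_def_field]
    have ht0 : (0:ℝ) < t - 0 := by simpa using ht.1
    rw [le_div_iff₀ ht0]
    have h0 : f (x + (0:ℝ) • v) = f x := by simp
    nlinarith [h3, h0]
  have htend := hasDerivAt_iff_tendsto_slope.mp h1
  have htend' : Tendsto (slope (fun t : ℝ => f (x + t • v)) 0) (𝓝[>] 0)
      (𝓝 (fderiv ℝ f x v)) :=
    htend.mono_left (nhdsWithin_mono 0 (fun y hy => ne_of_gt hy))
  refine ge_of_tendsto htend' ?_
  filter_upwards [Ioc_mem_nhdsGT_of_mem (by norm_num : (0:ℝ) ∈ Set.Ico 0 1)] with t ht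
  exact hslope t ht

lemma fderiv_expand {n : ℕ} (f : (Fin n → ℝ) → ℝ) (x : Fin n → ℝ)
    (w : Fin n → ℝ) : fderiv ℝ f x w = ∑ i, pd f x i * w i := by
  have hw : (∑ i, w i • (Pi.single i 1 : Fin n → ℝ)) = w := by
    funext j
    simp [Finset.sum_apply, Pi.single_apply]
  calc fderiv ℝ f x w
      = fderiv ℝ f x (∑ i, w i • (Pi.single i 1 : Fin n → ℝ)) := by rw [hw]
    _ = ∑ i, w i • fderiv ℝ f x (Pi.single i 1 : Fin n → ℝ) := by
        rw [map_sum]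
        exact Finset.sum_congr rfl fun i _ => by rw [map_smul]
    _ = ∑ i, pd f x i * w i := by
        exact Finset.sum_congr rfl fun i _ => by rw [pd, smul_eq_mul, mul_comm]

theorem stmt19 {n : ℕ} (Γ : Set (Fin n → ℝ)) (f : (Fin n → ℝ) → ℝ)
    (hopen : IsOpen Γ) (hconv : Convex ℝ Γ)
    (hcone : ∀ x ∈ Γ, ∀ t : ℝ, 0 < t → t • x ∈ Γ)
    (horth : {x : Fin n → ℝ | ∀ i, 0 < x i} ⊆ Γ)
    (hΓsym : ∀ (g : Equiv.Perm (Fin n)), ∀ x ∈ Γ, x ∘ g ∈ Γ)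
    (hfsym : ∀ (g : Equiv.Perm (Fin n)), ∀ x ∈ Γ, f (x ∘ g) = f x)
    (hconc : ConcaveOn ℝ Γ f)
    (hsmooth : ContDiffOn ℝ (⊤ : ℕ∞) f Γ)
    (hdiff : ∀ x ∈ Γ, DifferentiableAt ℝ f x)
    (hpd : ∀ x ∈ Γ, ∀ i, 0 ≤ pd f x i)
    (σ : ℝ) (hσ : ∃ μ ∈ Γ, σ < f μ) (hne : ∃ x ∈ Γ, f x = σ)
    (K : ℝ) (hK : 0 ≤ K)
    (hcond : ∀ lam ∈ Γ, f lam = σ →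
      -K * ∑ i, pd f lam i ≤ ∑ i, pd f lam i * lam i) :
    ∃ θ : ℝ, 0 < θ ∧ ∀ lam ∈ Γ, f lam = σ → θ ≤ ∑ i, pd f lam i := by
  obtain ⟨μ, hμΓ, hμσ⟩ := hσ
  set c := f μ - σ with hc
  have hc0 : 0 < c := by simp [hc]; linarith
  set B := ∑ i, |μ i| with hB
  have hBi : ∀ i, |μ i| ≤ B := by
    intro i
    rw [hB]
    exact Finset.single_le_sum (f := fun j => |μ j|) (fun j _ => abs_nonneg _) (Finset.mem_univ i)
  have hB0 : 0 ≤ B := Finset.sum_nonneg fun i _ => abs_nonneg _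
  have key : ∀ lam ∈ Γ, f lam = σ → c ≤ (B + K) * ∑ i, pd f lam i := by
    intro lam hlam hflam
    have hgrad := grad_ineq_s19 hconc hlam hμΓ (hdiff lam hlam)
    rw [hflam, fderiv_expand] at hgrad
    have h2 : ∑ i, pd f lam i * (μ - lam) i
        = ∑ i, pd f lam i * μ i - ∑ i, pd f lam i * lam i := by
      rw [← Finset.sum_sub_distrib]
      exact Finset.sum_congr rfl fun i _ => by simp [mul_sub]
    have h3 : ∑ i, pd f lam i * μ i ≤ B * ∑ i, pd f lam i := by
      rw [Finset.mul_sum]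
      apply Finset.sum_le_sum
      intro i _
      have hp := hpd lam hlam i
      calc pd f lam i * μ i ≤ pd f lam i * |μ i| :=
            mul_le_mul_of_nonneg_left (le_abs_self _) hp
        _ ≤ pd f lam i * B := mul_le_mul_of_nonneg_left (hBi i) hp
        _ = B * pd f lam i := mul_comm _ _
    have h4 := hcond lam hlam hflam
    rw [h2] at hgrad
    nlinarith [hgrad, h3, h4]
  obtain ⟨x0, hx0, hfx0⟩ := hne
  have hS0 : 0 ≤ ∑ i, pd f x0 i := Finset.sum_nonneg fun i _ => hpd x0 hx0 i
  have hBK : 0 < B + K := by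
    rcases lt_or_eq_of_le (by linarith : (0:ℝ) ≤ B + K) with h | h
    · exact h
    · exfalso
      have := key x0 hx0 hfx0
      rw [← h] at this
      simp at this
      linarith
  refine ⟨c / (B + K), div_pos hc0 hBK, ?_⟩
  intro lam hlam hflam
  have := key lam hlam hflam
  rw [div_le_iff₀ hBK]
  linarith
end
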